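/- Every regular k-germ is alternating: if ω is a k-germ on D that is nonatomic and closed on every affine k-plane, then for every permutation σ of {0,…,k} and every k-simplex S, ⟨σS, ω⟩ = sign(σ)·⟨S, ω⟩. -/

import Mathlib

/-- The euclidean space `ℝ^d` in which simplices live. -/
abbrev Pt (d : ℕ) := EuclideanSpace ℝ (Fin d)

/-- The `k`-dimensional volume of a `k`-simplex `[p₀ … p_k]` in `ℝ^d`. -/
noncomputable def vol {d k : ℕ} (S : Fin (k + 1) → Pt d) : ℝ :=
  (1 / (Nat.factorial k : ℝ)) *
    Real.sqrt (Matrix.det (Matrix.of fun i j : Fin k =>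
      ∑ m : Fin d, (S i.succ m - S 0 m) * (S j.succ m - S 0 m)))

/-- The coboundary of a germ, dual to the alternating-sum boundary operator. -/
noncomputable def cobdry {d n : ℕ} (ω : (Fin n → Pt d) → ℝ) :
    (Fin (n + 1) → Pt d) → ℝ :=
  fun T => ∑ i : Fin (n + 1), (-1 : ℝ) ^ (i : ℕ) * ω (T ∘ i.succAbove)

/-- A `k`-germ on `D` is nonatomic if it vanishes on every `k`-simplex in `D`
of zero `k`-volume. -/
def Nonatomic {d k : ℕ} (D : Set (Pt d)) (ω : (Fin (k + 1) → Pt d) → ℝ) : Prop :=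
  ∀ S : Fin (k + 1) → Pt d, convexHull ℝ (Set.range S) ⊆ D → vol S = 0 → ω S = 0

/-- A `k`-germ on `D` is closed on `k`-planes if the pull-back by every affine map
`φ : ℝ^k → ℝ^d` has vanishing coboundary on simplices mapped into `D`. -/
def ClosedOnPlanes {d k : ℕ} (D : Set (Pt d)) (ω : (Fin (k + 1) → Pt d) → ℝ) : Prop :=
  ∀ φ : (Fin k → ℝ) →ᵃ[ℝ] Pt d, ∀ T : Fin (k + 2) → (Fin k → ℝ),
    convexHull ℝ (Set.range fun i => φ (T i)) ⊆ D →
      cobdry (fun S : Fin (k + 1) → Pt k => ω (fun i => φ (S i).ofLp)) (fun i => WithLp.toLp 2 (T i)) = 0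

/-! Adjacent transpositions generate the symmetric group, so it suffices that swapping the
vertices `p_j`, `p_{j+1}` of `S` changes the sign of `ω`. Closedness applies to the degenerate
`(k + 1)`-simplex `[p₀ … p_j p_{j+1} p_j p_{j+2} … p_k]`, which lies in the affine plane spanned
by `S`. Every face of it except the `j`-th and the `(j + 2)`-nd still repeats `p_j`, so has zero
volume, and `ω` vanishes there; those two faces are `S` with `p_j`, `p_{j+1}` swapped and `S`
itself, entering the coboundary with the same sign `(-1)^j`. -/
open Function Equiv Equiv.Perm

lemma vol_eq_zero_of_apply_eq {d k : ℕ} {S : Fin (k + 1) → Pt d} {a b : Fin (k + 1)}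
    (hab : a ≠ b) (h : S a = S b) : vol S = 0 := by
  wlog hb : b ≠ 0 generalizing a b
  · exact this hab.symm h.symm fun ha => hab (ha.trans (not_not.1 hb).symm)
  obtain ⟨b, rfl⟩ := Fin.exists_succ_eq.2 hb
  suffices Matrix.det (Matrix.of fun i j : Fin k =>
      ∑ m : Fin d, (S i.succ m - S 0 m) * (S j.succ m - S 0 m)) = 0 by
    rw [vol, this, Real.sqrt_zero, mul_zero]
  cases a using Fin.cases with
  | zero => exact Matrix.det_eq_zero_of_row_eq_zero b fun j => by simp [← h]
  | succ a =>
    exact Matrix.det_zero_of_row_eq (fun hab' => hab (congrArg Fin.succ hab')) (by ext; simp [h])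

lemma Nonatomic.apply_comp_eq_zero {d k : ℕ} {D : Set (Pt d)} {ω : (Fin (k + 1) → Pt d) → ℝ}
    (hna : Nonatomic D ω) {ι : Type*} {S : ι → Pt d} (hS : convexHull ℝ (Set.range S) ⊆ D)
    {τ : Fin (k + 1) → ι} (hτ : ¬Injective τ) : ω (S ∘ τ) = 0 := by
  obtain ⟨a, b, hτab, hab⟩ : ∃ a b, τ a = τ b ∧ a ≠ b := by simpa [Injective] using hτ
  exact hna _ ((convexHull_mono (Set.range_comp_subset_range τ S)).trans hS)
    (vol_eq_zero_of_apply_eq hab (congrArg S hτab))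

lemma exists_affineMap_comp_eq {R V P : Type*} [Ring R] [AddCommGroup V] [Module R V]
    [AddTorsor V P] {k : ℕ} (S : Fin (k + 1) → P) :
    ∃ (φ : (Fin k → R) →ᵃ[R] P) (T : Fin (k + 1) → Fin k → R), φ ∘ T = S := by
  classical
  refine ⟨(Fintype.linearCombination R fun i : Fin k => S i.succ -ᵥ S 0).toAffineMap +ᵥ
    AffineMap.const R _ (S 0), Fin.cons 0 fun i => Pi.single i 1, ?_⟩
  funext m
  cases m using Fin.cases <;> simp

lemma ClosedOnPlanes.cobdry_comp_eq_zero {d k : ℕ} {D : Set (Pt d)}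
    {ω : (Fin (k + 1) → Pt d) → ℝ} (hcl : ClosedOnPlanes D ω) {S : Fin (k + 1) → Pt d}
    (hS : convexHull ℝ (Set.range S) ⊆ D) (g : Fin (k + 2) → Fin (k + 1)) :
    cobdry ω (S ∘ g) = 0 := by
  obtain ⟨φ, T, rfl⟩ := exists_affineMap_comp_eq (R := ℝ) S
  exact hcl φ (T ∘ g) ((convexHull_mono (Set.range_comp_subset_range g _)).trans hS)

/-- The vertex indices `0, …, j, j + 1, j, j + 2, …, k` of the degenerate simplex
`[p₀ … p_j p_{j+1} p_j p_{j+2} … p_k]`. -/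
def doubledIndex {k : ℕ} (j : Fin k) (m : Fin (k + 2)) : Fin (k + 1) :=
  ⟨if (m : ℕ) = j + 2 then j else if (m : ℕ) ≤ j + 1 then m else m - 1, by split_ifs <;> omega⟩

lemma doubledIndex_comp_succAbove_castSucc {k : ℕ} (j : Fin k) :
    doubledIndex j ∘ j.castSucc.castSucc.succAbove = swap j.castSucc j.succ := by
  ext m
  simp only [comp_apply, doubledIndex, Fin.succAbove, Fin.lt_def, swap_apply_def, Fin.ext_iff]
  split_ifs <;> simp_all <;> omega

lemma doubledIndex_comp_succAbove_succ {k : ℕ} (j : Fin k) :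
    doubledIndex j ∘ j.succ.succ.succAbove = id := by
  ext m
  simp only [comp_apply, doubledIndex, Fin.succAbove, Fin.lt_def]
  split_ifs <;> simp_all; omega

lemma not_injective_doubledIndex_comp_succAbove {k : ℕ} (j : Fin k) {i : Fin (k + 2)}
    (hi : i ≠ j.castSucc.castSucc) (hi' : i ≠ j.succ.succ) :
    ¬Injective (doubledIndex j ∘ i.succAbove) := by
  obtain ⟨u, hu⟩ := Fin.exists_succAbove_eq hi.symm
  obtain ⟨v, hv⟩ := Fin.exists_succAbove_eq hi'.symm
  intro hinj
  have huv : u = v := hinj <| by simp [hu, hv, doubledIndex]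
  exact absurd (congrArg Fin.val (hu.symm.trans (huv ▸ hv))) (by simp; omega)

lemma apply_comp_swap_castSucc_succ {d k : ℕ} (ω : (Fin (k + 1) → Pt d) → ℝ)
    (S : Fin (k + 1) → Pt d)
    (hdeg : ∀ τ : Fin (k + 1) → Fin (k + 1), ¬Injective τ → ω (S ∘ τ) = 0)
    (hcob : ∀ g : Fin (k + 2) → Fin (k + 1), cobdry ω (S ∘ g) = 0) (j : Fin k) :
    ω (S ∘ swap j.castSucc j.succ) = -ω S := by
  have hne : j.castSucc.castSucc ≠ j.succ.succ := by simp [Fin.ext_iff]; omega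
  have h := hcob (doubledIndex j)
  simp only [cobdry, comp_assoc] at h
  rw [Fintype.sum_eq_add _ _ hne fun i hi => mul_eq_zero_of_right _
    (hdeg _ (not_injective_doubledIndex_comp_succAbove j hi.1 hi.2)),
    doubledIndex_comp_succAbove_castSucc, doubledIndex_comp_succAbove_succ, comp_id] at h
  have : (-1 : ℝ) ^ (j : ℕ) * (ω (S ∘ swap j.castSucc j.succ) + ω S) = 0 := by
    rw [← h]; simp only [Fin.val_castSucc, Fin.val_succ, pow_succ]; ring
  linarith [neg_one_pow_mul_eq_zero_iff.1 this]

lemma eq_sign_mul_of_mul_swap_castSucc_succ {R : Type*} [Ring R] {n : ℕ}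
    (f : Perm (Fin (n + 1)) → R)
    (hf : ∀ σ (j : Fin n), f (σ * swap j.castSucc j.succ) = -f σ) (σ : Perm (Fin (n + 1))) :
    f σ = ((sign σ : ℤ) : R) * f 1 := by
  induction σ using Submonoid.induction_of_closure_eq_top_right (mclosure_swap_castSucc_succ n) with
  | one => simp
  | mul_right σ _ hswap ih =>
    obtain ⟨j, rfl⟩ := hswap
    rw [hf, ih, map_mul, sign_swap Fin.castSucc_lt_succ.ne]
    simp

/-- Every regular `k`-germ is alternating: if `ω` is nonatomic and closed on every
affine `k`-plane, then `⟨σS, ω⟩ = sign(σ)·⟨S, ω⟩` for every permutation `σ` of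
`{0,…,k}` and every `k`-simplex `S` in `D`. -/
theorem regular_alternating {d k : ℕ} (D : Set (Pt d))
    (ω : (Fin (k + 1) → Pt d) → ℝ)
    (hna : Nonatomic D ω) (hcl : ClosedOnPlanes D ω) :
    ∀ σ : Equiv.Perm (Fin (k + 1)), ∀ S : Fin (k + 1) → Pt d,
      convexHull ℝ (Set.range S) ⊆ D →
        ω (S ∘ ⇑σ⁻¹) = ((Equiv.Perm.sign σ : ℤ) : ℝ) * ω S := by
  intro σ S hS
  have hswap (τ : Perm (Fin (k + 1))) (j : Fin k) :
      ω (S ∘ ⇑(τ * swap j.castSucc j.succ)) = -ω (S ∘ τ) := by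
    have hSτ : convexHull ℝ (Set.range (S ∘ τ)) ⊆ D := by rwa [τ.surjective.range_comp]
    exact apply_comp_swap_castSucc_succ ω (S ∘ τ) (fun _ => hna.apply_comp_eq_zero hSτ)
      (hcl.cobdry_comp_eq_zero hSτ) j
  rw [eq_sign_mul_of_mul_swap_castSucc_succ (fun τ => ω (S ∘ τ)) hswap σ⁻¹, sign_inv]
  rfl
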